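/- For all integers n ≥ 1 and 0 ≤ k ≤ n−1, one has Σ_{p=0}^{n} NO(n,k,p) = Σ_{p=0}^{n} NE(n,k,p) = 2^{k+1} · binomial(2n−k−2, n−1). -/

import Mathlib

/-- The x-coordinate (number of East steps) of the lattice path `P` after `m` steps. -/
def latticePos {n : ℕ} (P : Fin n → Bool) (m : ℕ) : ℕ :=
  (Finset.univ.filter (fun i : Fin n => (i : ℕ) < m ∧ P i = true)).card

/-- The number of intersections of paths `P` and `Q` (common lattice points with
coordinate sum strictly between `0` and `n`). -/
def latticeInter {n : ℕ} (P Q : Fin n → Bool) : ℕ :=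
  ((Finset.Ioo 0 n).filter (fun m => latticePos P m = latticePos Q m)).card

/-- Number of ordered pairs of lattice paths of length `n`, ending at `(r, n-r)` and
`(s, n-s)` respectively, intersecting exactly `k` times (natural-number version). -/
def Mnat (n k r s : ℕ) : ℕ :=
  (Finset.univ.filter (fun PQ : (Fin n → Bool) × (Fin n → Bool) =>
      latticePos PQ.1 n = r ∧ latticePos PQ.2 n = s ∧ latticeInter PQ.1 PQ.2 = k)).card

/-- `M n k r s`, extended by zero to integer arguments. -/
def M (n k r s : ℤ) : ℤ :=
  if 0 ≤ n ∧ 0 ≤ k ∧ 0 ≤ r ∧ 0 ≤ s then Mnat n.toNat k.toNat r.toNat s.toNat else 0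

/-- `N n k r = M n k r r`. -/
def N (n k r : ℤ) : ℤ := M n k r r

/-- `NE n k p = Σ_{r+s=2p, 0 ≤ r,s ≤ n} M n k r s`. -/
noncomputable def NE (n k p : ℤ) : ℤ := ∑ r ∈ Finset.Icc (0 : ℤ) n, M n k r (2 * p - r)

/-- `NO n k p = Σ_{r+s=2p+1, 0 ≤ r,s ≤ n} M n k r s`. -/
noncomputable def NO (n k p : ℤ) : ℤ := ∑ r ∈ Finset.Icc (0 : ℤ) n, M n k r (2 * p + 1 - r)

/-- Binomial coefficient for integer arguments (zero unless both are nonnegative). -/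
def ichoose (a b : ℤ) : ℤ :=
  if 0 ≤ a ∧ 0 ≤ b then (a.toNat).choose b.toNat else 0

/-!
The last step of either path does not affect the intersections, which are only counted at
times `1, …, n - 1`, and of the four choices of last steps exactly two give `r + s` of either
parity. Hence both sums equal `2 T(n - 1, k)`, where `T(m, k)` counts the pairs of paths of
length `m` meeting exactly `k` times at times `1, …, m`.

To compute `T`, refine it by the final gap `d = r - s`: the counts `A(m, k, d)` satisfy
`A(m + 1, k + [d = 0], d) = 2 A(m, k, d) + A(m, k, d - 1) + A(m, k, d + 1)`, which for `m ≥ 1`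
is solved by the ballot-type expression `2^k (C(2m-k-1, m+|d|-1) - C(2m-k-1, m+|d|))`.
Summing over `d` telescopes to `T(m, k) = 2^k C(2m - k, m)`.
-/

open Finset

section LatticePath

variable {m n : ℕ}

lemma latticePos_zero (P : Fin n → Bool) : latticePos P 0 = 0 := by
  simp [latticePos]

lemma latticePos_le (P : Fin n → Bool) (t : ℕ) : latticePos P t ≤ n :=
  (card_filter_le _ _).trans (card_fin n).le

lemma latticePos_snoc (P : Fin m → Bool) (b : Bool) (t : ℕ) :
    latticePos (Fin.snoc P b : Fin (m + 1) → Bool) t =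
      latticePos P t + if m < t then b.toNat else 0 := by
  simp only [latticePos, card_filter, Fin.sum_univ_castSucc, Fin.snoc_castSucc, Fin.snoc_last,
    Fin.val_castSucc, Fin.val_last]
  cases b <;> split_ifs <;> simp_all

lemma latticePos_snoc_of_le (P : Fin m → Bool) (b : Bool) {t : ℕ} (ht : t ≤ m) :
    latticePos (Fin.snoc P b : Fin (m + 1) → Bool) t = latticePos P t := by
  simp [latticePos_snoc, ht.not_gt]

lemma latticePos_snoc_last (P : Fin m → Bool) (b : Bool) :
    latticePos (Fin.snoc P b : Fin (m + 1) → Bool) (m + 1) = latticePos P m + b.toNat := by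
  rw [latticePos_snoc, if_pos m.lt_succ_self, latticePos, latticePos]
  congr 2
  exact filter_congr fun (i : Fin m) _ => by simp [i.isLt, Nat.lt_succ_of_lt i.isLt]

def numMeets (P Q : Fin m → Bool) : ℕ :=
  #{t ∈ Ioc 0 m | latticePos P t = latticePos Q t}

lemma numMeets_snoc (P Q : Fin m → Bool) (a b : Bool) :
    numMeets (Fin.snoc P a : Fin (m + 1) → Bool) (Fin.snoc Q b) =
      numMeets P Q + if latticePos P m + a.toNat = latticePos Q m + b.toNat then 1 else 0 := by
  simp only [numMeets, card_filter]
  rw [sum_Ioc_succ_top m.zero_le, latticePos_snoc_last, latticePos_snoc_last]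
  congr 1
  refine sum_congr rfl fun t ht => ?_
  rw [latticePos_snoc_of_le _ _ (mem_Ioc.1 ht).2, latticePos_snoc_of_le _ _ (mem_Ioc.1 ht).2]

lemma latticeInter_snoc (P Q : Fin m → Bool) (a b : Bool) :
    latticeInter (Fin.snoc P a : Fin (m + 1) → Bool) (Fin.snoc Q b) = numMeets P Q := by
  rw [latticeInter, Finset.Ioo_add_one_right_eq_Ioc, numMeets]
  refine congrArg card (filter_congr fun t ht => ?_)
  rw [latticePos_snoc_of_le _ _ (mem_Ioc.1 ht).2, latticePos_snoc_of_le _ _ (mem_Ioc.1 ht).2]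

end LatticePath

abbrev PathPair (n : ℕ) : Type := (Fin n → Bool) × (Fin n → Bool)

def PathPair.snocEquiv (m : ℕ) : PathPair m × (Bool × Bool) ≃ PathPair (m + 1) where
  toFun x := (Fin.snoc x.1.1 x.2.1, Fin.snoc x.1.2 x.2.2)
  invFun PQ := ((Fin.init PQ.1, Fin.init PQ.2), (PQ.1 (Fin.last m), PQ.2 (Fin.last m)))
  left_inv x := by simp
  right_inv PQ := by simp

lemma PathPair.card_filter_succ {m : ℕ} (p : PathPair (m + 1) → Prop) [DecidablePred p] :
    #{PQ | p PQ} =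
      ∑ PQ : PathPair m, #{ab : Bool × Bool | p (Fin.snoc PQ.1 ab.1, Fin.snoc PQ.2 ab.2)} := by
  simp only [card_filter]
  rw [← (PathPair.snocEquiv m).sum_comp, Fintype.sum_prod_type]
  rfl

lemma M_natCast (n k : ℕ) (r s : ℤ) :
    M n k r s = #{PQ : PathPair n |
      (latticePos PQ.1 n : ℤ) = r ∧ (latticePos PQ.2 n : ℤ) = s ∧ latticeInter PQ.1 PQ.2 = k} := by
  by_cases hrs : 0 ≤ r ∧ 0 ≤ s
  · lift r to ℕ using hrs.1
    lift s to ℕ using hrs.2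
    simp [M, Mnat]
  · rw [M, if_neg (by omega), eq_comm, Nat.cast_eq_zero, card_eq_zero, filter_eq_empty_iff]
    omega

lemma sum_Icc_ite_eq_two_mul_add (n : ℕ) {x c : ℤ} (hx : 0 ≤ x) (hxn : x ≤ 2 * n) (hc : 0 ≤ c)
    (hc2 : c < 2) :
    ∑ p ∈ Icc (0 : ℤ) n, (if x = 2 * p + c then 1 else 0 : ℤ) = if x % 2 = c then 1 else 0 := by
  split_ifs with hxc
  · rw [sum_eq_single_of_mem (x / 2) (by simp; omega) (fun p _ hp => if_neg (by omega)),
      if_pos (by omega)]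
  · exact sum_eq_zero fun p _ => if_neg (by omega)

def parityCount (n k c : ℕ) : ℕ :=
  #{PQ : PathPair n | latticeInter PQ.1 PQ.2 = k ∧ (latticePos PQ.1 n + latticePos PQ.2 n) % 2 = c}

lemma sum_M_eq_parityCount (n k c : ℕ) (hc : c < 2) :
    ∑ p ∈ Icc (0 : ℤ) n, ∑ r ∈ Icc (0 : ℤ) n, M n k r (2 * p + c - r) = parityCount n k c := by
  simp only [M_natCast, parityCount, natCast_card_filter]
  calc _ = ∑ PQ : PathPair n, ∑ p ∈ Icc (0 : ℤ) n, ∑ r ∈ Icc (0 : ℤ) n,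
        if (latticePos PQ.1 n : ℤ) = r ∧ (latticePos PQ.2 n : ℤ) = 2 * p + c - r ∧
          latticeInter PQ.1 PQ.2 = k then (1 : ℤ) else 0 :=
        (sum_congr rfl fun p _ => sum_comm).trans sum_comm
    _ = _ := sum_congr rfl fun PQ _ => ?_
  have hP := latticePos_le PQ.1 n
  have hQ := latticePos_le PQ.2 n
  -- only `r = r(P)` contributes, and then exactly one `p` if `r(P) + r(Q) ≡ c [MOD 2]`
  simp only [ite_and, sum_ite_eq, mem_Icc, Nat.cast_nonneg, Nat.cast_le.2 hP, and_self, if_true]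
  by_cases hk : latticeInter PQ.1 PQ.2 = k
  · simp only [hk, if_true, eq_sub_iff_add_eq]
    rw [sum_Icc_ite_eq_two_mul_add n (by positivity) (by omega) (by omega) (by omega)]
    exact if_congr (by omega) rfl rfl
  · simp [hk]

lemma sum_NE_eq_parityCount (n k : ℕ) : ∑ p ∈ Icc (0 : ℤ) n, NE n k p = parityCount n k 0 := by
  simpa [NE] using sum_M_eq_parityCount n k 0 two_pos

lemma sum_NO_eq_parityCount (n k : ℕ) : ∑ p ∈ Icc (0 : ℤ) n, NO n k p = parityCount n k 1 := by
  simpa [NO] using sum_M_eq_parityCount n k 1 one_lt_two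

def meetCount (m k : ℕ) : ℕ := #{PQ : PathPair m | numMeets PQ.1 PQ.2 = k}

lemma card_boolPair_parity (x y : ℕ) {c : ℕ} (hc : c < 2) :
    #{ab : Bool × Bool | (x + ab.1.toNat + (y + ab.2.toNat)) % 2 = c} = 2 := by
  have hx := Nat.mod_lt x two_pos
  have hy := Nat.mod_lt y two_pos
  simp_rw [Nat.add_mod (x + _), Nat.add_mod x, Nat.add_mod y]
  generalize x % 2 = r at hx
  generalize y % 2 = s at hy
  interval_cases r <;> interval_cases s <;> interval_cases c <;> decide

lemma parityCount_succ (m k : ℕ) {c : ℕ} (hc : c < 2) :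
    parityCount (m + 1) k c = 2 * meetCount m k := by
  rw [parityCount, PathPair.card_filter_succ, meetCount, card_filter, mul_sum]
  refine sum_congr rfl fun PQ _ => ?_
  simp only [latticeInter_snoc, latticePos_snoc_last]
  split_ifs with h <;> simp [h, card_boolPair_parity _ _ hc]

def gapCount (m k : ℕ) (d : ℤ) : ℕ :=
  #{PQ : PathPair m | numMeets PQ.1 PQ.2 = k ∧ (latticePos PQ.1 m : ℤ) - latticePos PQ.2 m = d}

lemma gapCount_zero (k : ℕ) (d : ℤ) : gapCount 0 k d = if k = 0 ∧ d = 0 then 1 else 0 := by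
  simp [gapCount, numMeets, latticePos_zero, eq_comm, apply_ite card]

lemma gapCount_succ (m k : ℕ) (d : ℤ) :
    gapCount (m + 1) (k + if d = 0 then 1 else 0) d =
      2 * gapCount m k d + gapCount m k (d - 1) + gapCount m k (d + 1) := by
  have step (a b : Bool) :
      #{PQ : PathPair m | numMeets (Fin.snoc PQ.1 a : Fin (m + 1) → Bool) (Fin.snoc PQ.2 b) =
          (k + if d = 0 then 1 else 0) ∧
        (latticePos (Fin.snoc PQ.1 a : Fin (m + 1) → Bool) (m + 1) : ℤ) -
          latticePos (Fin.snoc PQ.2 b : Fin (m + 1) → Bool) (m + 1) = d} =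
        gapCount m k (d - a.toNat + b.toNat) := by
    refine congrArg card (filter_congr fun PQ _ => ?_)
    rw [numMeets_snoc, latticePos_snoc_last, latticePos_snoc_last]
    push_cast
    split_ifs <;> omega
  rw [gapCount, PathPair.card_filter_succ]
  simp only [card_filter]
  rw [sum_comm]
  simp only [← card_filter, step, Fintype.sum_prod_type, Fintype.sum_bool, Bool.toNat_true,
    Bool.toNat_false, Nat.cast_one, Nat.cast_zero, sub_zero, add_zero, sub_add_cancel]
  ring

lemma ichoose_natCast (a b : ℕ) : ichoose a b = a.choose b := by
  simp [ichoose]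

lemma ichoose_eq_zero_of_lt {a b : ℤ} (h : a < b) : ichoose a b = 0 := by
  rw [ichoose]
  split_ifs with hab
  · rw [Nat.choose_eq_zero_of_lt (by omega), Nat.cast_zero]
  · rfl

lemma ichoose_succ_succ (a : ℤ) {b : ℤ} (hb : 0 ≤ b) :
    ichoose (a + 1) (b + 1) = ichoose a b + ichoose a (b + 1) := by
  lift b to ℕ using hb
  rcases lt_or_ge a 0 with ha | ha
  · rw [ichoose_eq_zero_of_lt (by omega), ichoose_eq_zero_of_lt (by omega),
      ichoose_eq_zero_of_lt (by omega), add_zero]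
  · lift a to ℕ using ha
    rw [← Nat.cast_add_one, ← Nat.cast_add_one, ichoose_natCast, ichoose_natCast, ichoose_natCast,
      Nat.choose_succ_succ', Nat.cast_add]

lemma ichoose_two_mul_add_one (m : ℕ) : ichoose (2 * m + 1) m = ichoose (2 * m + 1) (m + 1) := by
  have h₁ := ichoose_natCast (2 * m + 1) m
  have h₂ := ichoose_natCast (2 * m + 1) (m + 1)
  push_cast at h₁ h₂
  rw [h₁, h₂, Nat.choose_symm_half]

lemma ichoose_add_two (a : ℤ) {b : ℤ} (hb : 0 ≤ b) :
    ichoose (a + 2) (b + 2) = ichoose a b + 2 * ichoose a (b + 1) + ichoose a (b + 2) := by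
  have h₁ := ichoose_succ_succ (a + 1) (by omega : 0 ≤ b + 1)
  have h₂ := ichoose_succ_succ a hb
  have h₃ := ichoose_succ_succ a (by omega : 0 ≤ b + 1)
  ring_nf at h₁ h₂ h₃ ⊢
  linear_combination h₁ + h₂ + h₃

def gapFormula (m k : ℕ) (d : ℤ) : ℤ :=
  2 ^ k * (ichoose (2 * m - k - 1) (m + |d| - 1) - ichoose (2 * m - k - 1) (m + |d|))

lemma gapFormula_neg (m k : ℕ) (d : ℤ) : gapFormula m k (-d) = gapFormula m k d := by
  rw [gapFormula, gapFormula, abs_neg]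

lemma gapFormula_eq_zero {m k : ℕ} {d : ℤ} (h : (m : ℤ) < k + |d|) : gapFormula m k d = 0 := by
  rw [gapFormula, ichoose_eq_zero_of_lt (by omega), ichoose_eq_zero_of_lt (by omega), sub_zero,
    mul_zero]

lemma gapFormula_succ_zero_zero (m : ℕ) : gapFormula (m + 1) 0 0 = 0 := by
  have h := ichoose_two_mul_add_one m
  simp only [gapFormula, abs_zero, pow_zero, one_mul]
  push_cast
  ring_nf at h ⊢
  linear_combination h

lemma gapFormula_succ_of_pos {m : ℕ} (hm : 1 ≤ m) (k : ℕ) {d : ℤ} (hd : 0 < d) :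
    gapFormula (m + 1) k d =
      2 * gapFormula m k d + gapFormula m k (d - 1) + gapFormula m k (d + 1) := by
  have h₁ := ichoose_add_two (2 * m - k - 1) (by omega : 0 ≤ (m : ℤ) + d - 2)
  have h₂ := ichoose_add_two (2 * m - k - 1) (by omega : 0 ≤ (m : ℤ) + d - 1)
  simp only [gapFormula, abs_of_pos hd, abs_of_nonneg (by omega : 0 ≤ d - 1),
    abs_of_pos (by omega : 0 < d + 1)]
  push_cast
  ring_nf at h₁ h₂ ⊢
  linear_combination 2 ^ k * (h₁ - h₂)

lemma gapFormula_succ_succ_zero {m : ℕ} (hm : 1 ≤ m) (k : ℕ) :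
    gapFormula (m + 1) (k + 1) 0 = 2 * gapFormula m k 0 + 2 * gapFormula m k 1 := by
  have h₁ := ichoose_succ_succ (2 * m - k - 1) (by omega : 0 ≤ (m : ℤ) - 1)
  have h₂ := ichoose_succ_succ (2 * m - k - 1) (by omega : 0 ≤ (m : ℤ))
  simp only [gapFormula, abs_zero, abs_one]
  push_cast
  ring_nf at h₁ h₂ ⊢
  linear_combination 2 ^ (k + 1) * (h₁ - h₂)

lemma gapFormula_succ {m : ℕ} (hm : 1 ≤ m) (k : ℕ) (d : ℤ) :
    gapFormula (m + 1) (k + if d = 0 then 1 else 0) d =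
      2 * gapFormula m k d + gapFormula m k (d - 1) + gapFormula m k (d + 1) := by
  rcases lt_trichotomy d 0 with hd | rfl | hd
  · rw [if_neg hd.ne, add_zero, ← gapFormula_neg, gapFormula_succ_of_pos hm k (neg_pos.2 hd),
      show -d - 1 = -(d + 1) by ring, show -d + 1 = -(d - 1) by ring,
      gapFormula_neg, gapFormula_neg, gapFormula_neg]
    ring
  · rw [if_pos rfl, gapFormula_succ_succ_zero hm, zero_sub, gapFormula_neg, zero_add]
    ring
  · rw [if_neg hd.ne', add_zero, gapFormula_succ_of_pos hm k hd]

lemma gapCount_succ_zero_zero (m : ℕ) : gapCount (m + 1) 0 0 = 0 := by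
  refine card_eq_zero.2 (filter_eq_empty_iff.2 fun PQ _ ⟨hmeet, hgap⟩ => ?_)
  have : m + 1 ∈ ({t ∈ Ioc 0 (m + 1) | latticePos PQ.1 t = latticePos PQ.2 t} : Finset ℕ) :=
    mem_filter.2 ⟨right_mem_Ioc.2 m.succ_pos, by omega⟩
  rw [numMeets, card_eq_zero] at hmeet
  simp [hmeet] at this

lemma exists_eq_add_ite {k : ℕ} {d : ℤ} (h : ¬(d = 0 ∧ k = 0)) :
    ∃ j, k = j + if d = 0 then 1 else 0 :=
  ⟨k - if d = 0 then 1 else 0, by split_ifs <;> omega⟩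

lemma gapCount_one (k : ℕ) (d : ℤ) : (gapCount 1 k d : ℤ) = gapFormula 1 k d := by
  by_cases h : d = 0 ∧ k = 0
  · obtain ⟨rfl, rfl⟩ := h
    rw [gapCount_succ_zero_zero, gapFormula_succ_zero_zero, Nat.cast_zero]
  obtain ⟨j, rfl⟩ := exists_eq_add_ite h
  rw [gapCount_succ, gapCount_zero, gapCount_zero, gapCount_zero]
  by_cases hsmall : j = 0 ∧ |d| ≤ 1
  · obtain ⟨rfl, hd⟩ := hsmall
    obtain rfl | rfl | rfl : d = -1 ∨ d = 0 ∨ d = 1 := by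
      rw [abs_le] at hd
      omega
    all_goals decide
  · have := abs_cases d
    rw [gapFormula_eq_zero]
    · split_ifs <;> omega
    · push_cast
      split_ifs <;> omega

theorem gapCount_eq_gapFormula {m : ℕ} (hm : 1 ≤ m) (k : ℕ) (d : ℤ) :
    (gapCount m k d : ℤ) = gapFormula m k d := by
  induction m, hm using Nat.le_induction generalizing k d with
  | base => exact gapCount_one k d
  | succ m hm ih =>
    by_cases h : d = 0 ∧ k = 0
    · obtain ⟨rfl, rfl⟩ := h
      rw [gapCount_succ_zero_zero, gapFormula_succ_zero_zero, Nat.cast_zero]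
    obtain ⟨j, rfl⟩ := exists_eq_add_ite h
    rw [gapCount_succ, gapFormula_succ hm]
    push_cast
    rw [ih, ih, ih]

lemma meetCount_eq_sum_gapCount (m k : ℕ) :
    meetCount m k = ∑ d ∈ Icc (-m : ℤ) m, gapCount m k d := by
  rw [meetCount, card_eq_sum_card_fiberwise (f := fun PQ : PathPair m =>
    (latticePos PQ.1 m : ℤ) - latticePos PQ.2 m) (t := Icc (-m : ℤ) m) fun PQ _ => ?_]
  · simp only [gapCount, filter_filter]
  have := latticePos_le PQ.1 m
  have := latticePos_le PQ.2 m
  simp only [coe_Icc, Set.mem_Icc]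
  omega

lemma sum_Icc_sub_abs (f : ℤ → ℤ) (j : ℕ) :
    ∑ d ∈ Icc (-j : ℤ) j, (f (|d| - 1) - f |d|) = f (-1) + f 0 - 2 * f j := by
  induction j with
  | zero =>
    simp only [CharP.cast_eq_zero, neg_zero, Icc_self, sum_singleton, abs_zero, zero_sub]
    ring
  | succ j ih =>
    have hIcc : Icc (-(j + 1 : ℕ) : ℤ) (j + 1 : ℕ) =
        insert (-(j + 1 : ℤ)) (insert (j + 1 : ℤ) (Icc (-j : ℤ) j)) := by
      ext x
      simp only [mem_Icc, mem_insert]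
      omega
    rw [hIcc, sum_insert (by simp; omega), sum_insert (by simp), ih]
    simp only [abs_neg, abs_of_pos (by positivity : (0 : ℤ) < j + 1), Nat.cast_add, Nat.cast_one]
    ring_nf

theorem meetCount_eq (m k : ℕ) : (meetCount m k : ℤ) = 2 ^ k * ichoose (2 * m - k) m := by
  rcases m.eq_zero_or_pos with rfl | hm
  · rcases k.eq_zero_or_pos with rfl | hk
    · rfl
    · rw [ichoose_eq_zero_of_lt (by omega), mul_zero, Nat.cast_eq_zero]
      simp [meetCount, numMeets, hk.ne]
  set f : ℤ → ℤ := fun j => 2 ^ k * ichoose (2 * m - k - 1) (m + j)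
  have hG (d : ℤ) : gapFormula m k d = f (|d| - 1) - f |d| := by
    simp only [gapFormula, f, mul_sub, add_sub_assoc]
  have hpascal := ichoose_succ_succ (2 * m - k - 1) (by omega : 0 ≤ (m : ℤ) - 1)
  rw [meetCount_eq_sum_gapCount, Nat.cast_sum]
  simp only [gapCount_eq_gapFormula hm, hG]
  rw [sum_Icc_sub_abs]
  simp only [f, ichoose_eq_zero_of_lt (by omega : 2 * (m : ℤ) - k - 1 < m + m)]
  ring_nf at hpascal ⊢
  linear_combination (-2 ^ k) * hpascal

theorem total_sums_eq_general (n k : ℤ) (hn : 1 ≤ n) (hk : 0 ≤ k) :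
    (∑ p ∈ Finset.Icc (0 : ℤ) n, NO n k p) = (∑ p ∈ Finset.Icc (0 : ℤ) n, NE n k p) ∧
    (∑ p ∈ Finset.Icc (0 : ℤ) n, NE n k p) =
      2 ^ (k + 1).toNat * ichoose (2 * n - k - 2) (n - 1) := by
  lift k to ℕ using hk
  obtain ⟨m, rfl⟩ : ∃ m : ℕ, n = (m + 1 : ℕ) := ⟨n.toNat - 1, by omega⟩
  rw [sum_NO_eq_parityCount, sum_NE_eq_parityCount, parityCount_succ m k one_lt_two,
    parityCount_succ m k two_pos]
  refine ⟨rfl, ?_⟩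
  rw [show (k + 1 : ℤ).toNat = k + 1 by omega, Nat.cast_mul, meetCount_eq]
  push_cast
  rw [show 2 * ((m : ℤ) + 1) - k - 2 = 2 * m - k by ring, add_sub_cancel_right]
  ring

/-- For all integers `n ≥ 1` and `0 ≤ k ≤ n−1`,
`Σ_p NO(n,k,p) = Σ_p NE(n,k,p) = 2^(k+1) · binom(2n−k−2, n−1)`. -/
theorem total_sums_eq (n k : ℤ) (hn : 1 ≤ n) (hk : 0 ≤ k) (hkn : k ≤ n - 1) :
    (∑ p ∈ Finset.Icc (0 : ℤ) n, NO n k p) = (∑ p ∈ Finset.Icc (0 : ℤ) n, NE n k p) ∧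
    (∑ p ∈ Finset.Icc (0 : ℤ) n, NE n k p) =
      2 ^ (k + 1).toNat * ichoose (2 * n - k - 2) (n - 1) :=
  total_sums_eq_general n k hn hk
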